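/- Let h, μ ≥ 2, n = h(h−1)μ + 1, X = {0,1}, A* = {x ∈ N : x mod n ∈ {μ, hμ}}, A = A* ∪ X. Then A is an asymptotic basis for N with G(A) ≤ 2h + μ − 4, while G(A∖X) = h(h−1)μ; consequently there exist asymptotic bases A of order h' with a two-element subset X such that μ(A,X) = μ and G(A∖X)/(μ h'²) → 1/4 as h' → ∞. -/

import Mathlib

open Filter Set Pointwise

/-- `nfold A h` is the `h`-fold sumset of `A` (sums of exactly `h` elements). -/
def nfold (A : Set ℤ) : ℕ → Set ℤ
  | 0 => {0}
  | n + 1 => A + nfold A n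

/-- The `h`-fold sumset of `A` contains all sufficiently large naturals. -/
def CoversAt (A : Set ℤ) (h : ℕ) : Prop :=
  ∀ᶠ m : ℕ in Filter.atTop, (m : ℤ) ∈ nfold A h

/-- `A` is an asymptotic basis for ℕ. -/
def IsAsympBasis (A : Set ℤ) : Prop := ∃ h, CoversAt A h

/-- The order `G(A)` of an asymptotic basis. -/
noncomputable def basisOrder (A : Set ℤ) : ℕ := sInf {h | CoversAt A h}

/-- Lower asymptotic density of a set of integers. -/
noncomputable def lowerDensity (S : Set ℤ) : ℝ :=
  Filter.liminf (fun n : ℕ => ((S ∩ Set.Icc 1 (n : ℤ)).ncard : ℝ) / n) Filter.atTop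

/-- Diameter of a set of integers. -/
noncomputable def diam (S : Set ℤ) : ℤ := sSup S - sInf S

/-- `h`-fold sumset in `ZMod n`. -/
def nfoldZ {n : ℕ} (A : Set (ZMod n)) : ℕ → Set (ZMod n)
  | 0 => {0}
  | t + 1 => A + nfoldZ A t

/-! Modulo `n = h(h-1)μ + 1` the element `(h-1)μ` is a unit, with inverse `-h`. A sum of exactly
`t` elements of `A*` is `tμ + b(h-1)μ + kn` with `0 ≤ b ≤ t` and `k ≥ 0`: for `t = n - 1` these
residues exhaust `ℤ/n` and every large integer is such a sum, while for `t < n - 1` fewer than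
`n` residues are reached. Hence `G(A∖X) = n - 1`.
With `0` and `1` at hand, every `x ∈ [μ, n - 1 + μ]` is `aμ + b·hμ + c` with `a + b ≥ 1` and
`a + b + c ≤ 2h + μ - 4`, so `G(A) ≤ 2h + μ - 4`; conversely `aμ + b·hμ + c ≡ -3` forces
`a + b + c ≥ 2h - 3`. Thus `G(A) = 2h + O(μ)` and `G(A∖X) / (μ G(A)²) → 1/4` as `h → ∞`. -/

open Topology

theorem nfold_eq_nsmul (A : Set ℤ) : ∀ t, nfold A t = t • A
  | 0 => rfl
  | t + 1 => by rw [nfold, nfold_eq_nsmul A t, succ_nsmul, add_comm]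

theorem coversAt_iff (A : Set ℤ) (t : ℕ) :
    CoversAt A t ↔ ∀ᶠ m : ℕ in atTop, (m : ℤ) ∈ t • A := by
  simp only [CoversAt, nfold_eq_nsmul]

theorem nsmul_pair {M : Type*} [AddCommMonoid M] (x y : M) :
    ∀ t : ℕ, t • ({x, y} : Set M) = {z | ∃ a b : ℕ, a + b = t ∧ z = a • x + b • y}
  | 0 => by ext z; simp
  | t + 1 => by
    ext z
    rw [succ_nsmul, nsmul_pair x y t]
    constructor
    · rintro ⟨_, ⟨a, b, rfl, rfl⟩, w, hw, rfl⟩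
      rcases hw with rfl | rfl
      · exact ⟨a + 1, b, by omega, by simp only [succ_nsmul]; abel⟩
      · exact ⟨a, b + 1, by omega, by simp only [succ_nsmul]; abel⟩
    · rintro ⟨a, b, hab, rfl⟩
      rcases a with _ | a
      · obtain ⟨b, rfl⟩ : ∃ b', b = b' + 1 := ⟨b - 1, by omega⟩
        exact ⟨_, ⟨0, b, by omega, rfl⟩, y, by simp, by simp only [succ_nsmul]; abel⟩
      · exact ⟨_, ⟨a, b, by omega, rfl⟩, x, by simp, by simp only [succ_nsmul]; abel⟩

theorem add_natCast_mul_mem_nsmul {A : Set ℤ} {p : ℤ} (hA : ∀ x ∈ A, x + p ∈ A)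
    {t : ℕ} (ht : t ≠ 0) {x : ℤ} (hx : x ∈ t • A) (k : ℕ) : x + k * p ∈ t • A := by
  obtain ⟨t, rfl⟩ := Nat.exists_eq_succ_of_ne_zero ht
  rw [succ_nsmul] at hx ⊢
  obtain ⟨y, hy, a, ha, rfl⟩ := hx
  have hka : a + k * p ∈ A := by
    induction k with
    | zero => simpa using ha
    | succ k ih => simpa [add_mul, ← add_assoc] using hA _ ih
  exact ⟨y, hy, a + k * p, hka, by ring⟩

theorem ncard_nsmul_pair_le {M : Type*} [AddCommMonoid M] (x y : M) (t : ℕ) :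
    (t • ({x, y} : Set M)).ncard ≤ t + 1 := by
  have hsub : t • ({x, y} : Set M) ⊆
      (fun b => (t - b) • x + b • y) '' ↑(Finset.range (t + 1)) := by
    rw [nsmul_pair]
    rintro _ ⟨a, b, rfl, rfl⟩
    exact ⟨b, by simp, by simp⟩
  calc (t • ({x, y} : Set M)).ncard
      ≤ ((fun b => (t - b) • x + b • y) '' ↑(Finset.range (t + 1))).ncard :=
        Set.ncard_le_ncard hsub ((Finset.finite_toSet _).image _)
    _ ≤ (Finset.range (t + 1) : Set ℕ).ncard := Set.ncard_image_le (Finset.finite_toSet _)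
    _ = t + 1 := by simp

theorem nsmul_insert_zero_subset {M : Type*} [AddCommMonoid M] (e x y : M) :
    ∀ t : ℕ, t • ({0, e, x, y} : Set M) ⊆
      {z | ∃ a b c : ℕ, a + b + c ≤ t ∧ z = a • x + b • y + c • e}
  | 0 => by rintro z rfl; exact ⟨0, 0, 0, le_rfl, by simp⟩
  | t + 1 => by
    rw [succ_nsmul]
    rintro _ ⟨z, hz, w, hw, rfl⟩
    obtain ⟨a, b, c, habc, rfl⟩ := nsmul_insert_zero_subset e x y t hz
    rcases hw with rfl | rfl | rfl | rfl
    · exact ⟨a, b, c, by omega, by simp⟩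
    · exact ⟨a, b, c + 1, by omega, by simp only [succ_nsmul]; abel⟩
    · exact ⟨a + 1, b, c, by omega, by simp only [succ_nsmul]; abel⟩
    · exact ⟨a, b + 1, c, by omega, by simp only [succ_nsmul]; abel⟩

theorem coversAt_of_forall_residue {A : Set ℤ} {t n B : ℕ}
    (hA : ∀ z : ZMod n, ∃ v ≤ B, (v : ZMod n) = z ∧ ∀ k : ℕ, ((v + n * k : ℕ) : ℤ) ∈ t • A) :
    CoversAt A t := by
  rw [coversAt_iff, eventually_atTop]
  refine ⟨B, fun m hm => ?_⟩
  obtain ⟨v, hvB, hv, hvA⟩ := hA m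
  have hmod : v ≡ m [MOD n] := (ZMod.natCast_eq_natCast_iff v m n).1 hv
  obtain ⟨k, hk⟩ := (Nat.modEq_iff_dvd' (hvB.trans hm)).1 hmod
  simpa [show v + n * k = m by omega] using hvA k

theorem CoversAt.mem_nsmul_image_intCast {A : Set ℤ} {t : ℕ} (hA : CoversAt A t)
    (n : ℕ) [NeZero n] (z : ZMod n) : z ∈ t • ((↑) '' A : Set (ZMod n)) := by
  obtain ⟨N, hN⟩ := eventually_atTop.1 ((coversAt_iff A t).1 hA)
  have hmem := hN (z.val + n * N) (by nlinarith [NeZero.one_le (n := n)])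
  have hz : (((z.val + n * N : ℕ) : ℤ) : ZMod n) = z := by simp
  change _ ∈ t • (Int.castAddHom (ZMod n) '' A)
  rw [← hz, ← Set.image_nsmul]
  exact Set.mem_image_of_mem _ hmem

theorem basisOrder_le {A : Set ℤ} {t : ℕ} (hA : CoversAt A t) : basisOrder A ≤ t :=
  Nat.sInf_le hA

theorem le_basisOrder {A : Set ℤ} {t : ℕ} (hA : IsAsympBasis A)
    (hlt : ∀ s < t, ¬ CoversAt A s) : t ≤ basisOrder A :=
  le_csInf hA fun s hs => not_lt.1 fun hst => hlt s hst hs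

theorem diam_zero_one_union {y : ℤ} (hy : 1 ≤ y) : diam ({0, 1} ∪ {y}) = y := by
  have hmax : IsGreatest ({0, 1} ∪ {y} : Set ℤ) y := ⟨by simp, by simp; omega⟩
  have hmin : IsLeast ({0, 1} ∪ {y} : Set ℤ) 0 := ⟨by simp, by simp; omega⟩
  rw [diam, hmax.csSup_eq, hmin.csInf_eq, sub_zero]

def basisModulus (h μ : ℕ) : ℕ := h * (h - 1) * μ + 1

instance (h μ : ℕ) : NeZero (basisModulus h μ) := ⟨Nat.succ_ne_zero _⟩

-- `starSet h μ` and `basisSet h μ` are the paper's `A*` and `A = A* ∪ X`.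
def starSet (h μ : ℕ) : Set ℤ :=
  {x | 0 ≤ x ∧ (x % (basisModulus h μ : ℤ) = μ ∨ x % (basisModulus h μ : ℤ) = h * μ)}

def basisSet (h μ : ℕ) : Set ℤ := starSet h μ ∪ {0, 1}

section

variable {h μ : ℕ}

theorem mul_lt_basisModulus (hh : 2 ≤ h) : h * μ < basisModulus h μ := by
  have : h * μ ≤ h * (h - 1) * μ := by
    rw [mul_right_comm]; exact Nat.le_mul_of_pos_right _ (by omega)
  unfold basisModulus; omega

theorem add_basisModulus_mem_starSet {x : ℤ} (hx : x ∈ starSet h μ) :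
    x + basisModulus h μ ∈ starSet h μ := by
  obtain ⟨hx0, hxmod⟩ := hx
  exact ⟨by positivity, by rwa [Int.add_emod_right]⟩

theorem natCast_mem_starSet (hh : 2 ≤ h) :
    (μ : ℤ) ∈ starSet h μ ∧ ((h * μ : ℕ) : ℤ) ∈ starSet h μ := by
  have hhμ := mul_lt_basisModulus (μ := μ) hh
  have hμ : μ < basisModulus h μ := lt_of_le_of_lt (Nat.le_mul_of_pos_left μ (by omega)) hhμ
  refine ⟨⟨by positivity, Or.inl ?_⟩, ⟨by positivity, Or.inr ?_⟩⟩
  · exact Int.emod_eq_of_lt (by positivity) (by exact_mod_cast hμ)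
  · push_cast; exact Int.emod_eq_of_lt (by positivity) (by exact_mod_cast hhμ)

theorem intCast_mem_of_mem_starSet {x : ℤ} (hx : x ∈ starSet h μ) :
    (x : ZMod (basisModulus h μ)) = μ ∨ (x : ZMod (basisModulus h μ)) = (h * μ : ℕ) := by
  rw [← ZMod.intCast_mod]
  rcases hx.2 with hr | hr <;> simp [hr]

theorem le_of_mem_starSet (hh : 1 ≤ h) {x : ℤ} (hx : x ∈ starSet h μ) : (μ : ℤ) ≤ x := by
  obtain ⟨hx0, hxmod⟩ := hx
  have hdiv := Int.emod_add_mul_ediv x (basisModulus h μ)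
  have : 0 ≤ x / (basisModulus h μ : ℤ) := Int.ediv_nonneg hx0 (by positivity)
  have : (μ : ℤ) ≤ h * μ := le_mul_of_one_le_left (by positivity) (by exact_mod_cast hh)
  rcases hxmod with hr | hr <;> nlinarith [Int.natCast_nonneg (basisModulus h μ)]

theorem mem_nsmul_starSet (hh : 2 ≤ h) {a b : ℕ} (hab : a + b ≠ 0) (k : ℕ) :
    ((a * μ + b * (h * μ) + basisModulus h μ * k : ℕ) : ℤ) ∈ (a + b) • starSet h μ := by
  have hpair : ((a * μ + b * (h * μ) : ℕ) : ℤ) ∈ (a + b) • starSet h μ := by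
    have hsub : ({(μ : ℤ), ((h * μ : ℕ) : ℤ)} : Set ℤ) ⊆ starSet h μ := by
      rintro _ (rfl | rfl)
      exacts [(natCast_mem_starSet hh).1, (natCast_mem_starSet hh).2]
    refine Set.nsmul_subset_nsmul_left hsub ?_
    rw [nsmul_pair]
    exact ⟨a, b, rfl, by simp⟩
  simpa [mul_comm] using
    add_natCast_mul_mem_nsmul (fun _ => add_basisModulus_mem_starSet) hab hpair k

theorem exists_eq_mul_add_mul_add_of_le (hh : 2 ≤ h) (hμ : 2 ≤ μ) {x : ℕ} (hx₁ : μ ≤ x)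
    (hx₂ : x ≤ h * (h - 1) * μ + μ) :
    ∃ a b c : ℕ, a + b ≠ 0 ∧ a + b + c ≤ 2 * h + μ - 4 ∧ x = a * μ + b * (h * μ) + c := by
  have hN : h * (h - 1) * μ = (h - 1) * (h * μ) := by ring
  rcases lt_or_ge x (h * (h - 1) * μ) with hx | hx
  · have hq₁ : 0 < x / μ := Nat.div_pos hx₁ (by omega)
    have hq₂ : x / μ < (h - 1) * h := by
      rw [Nat.div_lt_iff_lt_mul (by omega)]; linarith [mul_comm h (h - 1)]
    have hb : x / μ / h < h - 1 := Nat.div_lt_iff_lt_mul (by omega) |>.2 hq₂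
    have hc : x % μ < μ := Nat.mod_lt _ (by omega)
    have ha : x / μ % h < h := Nat.mod_lt _ (by omega)
    have hq := Nat.mod_add_div (x / μ) h
    refine ⟨x / μ % h, x / μ / h, x % μ, ?_, by omega, ?_⟩
    · intro h0; rw [Nat.add_eq_zero_iff] at h0; rw [h0.1, h0.2] at hq; omega
    · calc x = μ * (x / μ % h + h * (x / μ / h)) + x % μ := by rw [hq, Nat.div_add_mod]
        _ = _ := by ring
  rcases lt_or_eq_of_le hx₂ with hx₂ | rfl
  · exact ⟨0, h - 1, x - h * (h - 1) * μ, by omega, by omega, by omega⟩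
  · exact ⟨1, h - 1, 0, by omega, by omega, by rw [hN]; ring⟩

/- If `aμ + b·hμ + c + 3 = wn`, size forces `w ∈ {1, 2}`; then `c + 3 - w = μj` and
`a + j = hs` with `j, s ≥ 1`, and `a + b + c = (h-1)(s + w) + (μ-1)j + w - 3 ≥ 2h - 3`. -/
theorem basisModulus_not_dvd (hh : 2 ≤ h) (hμ : 2 ≤ μ) {a b c : ℕ}
    (habc : a + b + c + 4 ≤ 2 * h) : ¬ basisModulus h μ ∣ a * μ + b * (h * μ) + c + 3 := by
  rintro ⟨w, hw⟩
  obtain ⟨k, rfl⟩ : ∃ k, h = k + 2 := ⟨h - 2, by omega⟩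
  rw [basisModulus, show k + 2 - 1 = k + 1 by omega] at hw
  have hw₁ : 1 ≤ w := Nat.pos_of_ne_zero (by rintro rfl; omega)
  have hw₂ : w ≤ 2 := by
    by_contra! hw₂
    have ha : a * μ ≤ a * ((k + 2) * μ) := Nat.mul_le_mul_left _ (by nlinarith)
    have hc : c ≤ c * ((k + 2) * μ) := Nat.le_mul_of_pos_right _ (by positivity)
    have : (a + b + c) * ((k + 2) * μ) ≤ 2 * k * ((k + 2) * μ) :=
      Nat.mul_le_mul_right _ (by omega)
    have h3 := Nat.mul_le_mul_left ((k + 2) * (k + 1) * μ + 1) (show 3 ≤ w by omega)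
    nlinarith [Nat.zero_le (k * k * μ), Nat.zero_le (k * μ)]
  have hwz : (a * μ + b * ((k + 2) * μ) + c + 3 : ℤ) = ((k + 2) * (k + 1) * μ + 1) * w := by
    exact_mod_cast hw
  set j : ℤ := w * (k + 2) * (k + 1) - a - b * (k + 2) with hj
  set s : ℤ := w * (k + 1) - b with hs
  have hcj : (c : ℤ) + 3 - w = μ * j := by rw [hj]; linear_combination hwz
  have hj₁ : 0 < j := by
    have : (0 : ℤ) < μ * j := by rw [← hcj]; omega
    exact pos_of_mul_pos_right this (by positivity)
  have has : (a : ℤ) + j = (k + 2) * s := by rw [hj, hs]; ring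
  have hs₁ : 0 < s := by
    have : (0 : ℤ) < (k + 2) * s := by rw [← has]; omega
    exact pos_of_mul_pos_right this (by positivity)
  have hμ' : (2 : ℤ) ≤ μ := by exact_mod_cast hμ
  nlinarith [mul_nonneg (show (0 : ℤ) ≤ k + 1 by positivity) (show (0 : ℤ) ≤ s - 1 by omega),
    mul_nonneg (show (0 : ℤ) ≤ k + 1 by positivity) (show (0 : ℤ) ≤ w - 1 by omega),
    mul_nonneg (show (0 : ℤ) ≤ μ - 2 by omega) hj₁.le]

theorem coversAt_starSet (hh : 2 ≤ h) (hμ : 0 < μ) :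
    CoversAt (starSet h μ) (h * (h - 1) * μ) := by
  set N := h * (h - 1) * μ with hNdef
  set n := basisModulus h μ
  have hN : ((N : ℕ) : ZMod n) + 1 = 0 := by
    rw [← Nat.cast_succ]; exact ZMod.natCast_self n
  have hNh : ((N : ℕ) : ZMod n) = h * (h - 1) * μ := by
    rw [hNdef]; push_cast [Nat.cast_sub (by omega : 1 ≤ h)]; ring
  refine coversAt_of_forall_residue (n := n) (B := N * (h * μ)) fun z => ?_
  -- `-h` inverts `(h-1)μ` modulo `n`, so `b` solves `Nμ + b(h-1)μ ≡ z`.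
  set b := ((z - N * μ) * (-h : ZMod n)).val
  have hbN : b ≤ N := Nat.lt_succ_iff.1 (ZMod.val_lt _)
  refine ⟨(N - b) * μ + b * (h * μ), ?_, ?_, fun k => ?_⟩
  · calc (N - b) * μ + b * (h * μ) ≤ (N - b) * (h * μ) + b * (h * μ) := by
          gcongr; exact Nat.le_mul_of_pos_left μ (by omega)
      _ = N * (h * μ) := by rw [← add_mul, Nat.sub_add_cancel hbN]
  · have hb : (b : ZMod n) = (z - N * μ) * (-h : ZMod n) := ZMod.natCast_zmod_val _
    push_cast [Nat.cast_sub hbN]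
    rw [hb]
    linear_combination (N * μ - z) * hN + (z - N * μ) * hNh
  · have hpos : N - b + b ≠ 0 := by
      rw [Nat.sub_add_cancel hbN]
      exact (Nat.mul_pos (Nat.mul_pos (by omega) (by omega)) hμ).ne'
    simpa [Nat.sub_add_cancel hbN] using mem_nsmul_starSet hh hpos k

theorem coversAt_basisSet (hh : 2 ≤ h) (hμ : 2 ≤ μ) :
    CoversAt (basisSet h μ) (2 * h + μ - 4) := by
  refine coversAt_of_forall_residue (n := basisModulus h μ) (B := h * (h - 1) * μ + μ)
    fun z => ?_
  have hz : (z - μ).val < h * (h - 1) * μ + 1 := ZMod.val_lt _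
  obtain ⟨a, b, c, hab, habc, hx⟩ :=
    exists_eq_mul_add_mul_add_of_le hh hμ (x := μ + (z - μ).val) (by omega) (by omega)
  refine ⟨μ + (z - μ).val, by omega, by simp, fun k => ?_⟩
  have hstar :
      ((a * μ + b * (h * μ) + basisModulus h μ * k : ℕ) : ℤ) ∈ (a + b) • basisSet h μ :=
    Set.nsmul_subset_nsmul_left Set.subset_union_left (mem_nsmul_starSet hh hab k)
  have hone : (c : ℤ) ∈ c • basisSet h μ := by
    simpa using Set.nsmul_mem_nsmul (n := c) (show (1 : ℤ) ∈ basisSet h μ by simp [basisSet])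
  have hsum := Set.add_mem_add hstar hone
  rw [← add_nsmul] at hsum
  refine Set.nsmul_subset_nsmul_right (show (0 : ℤ) ∈ basisSet h μ by simp [basisSet]) habc ?_
  rw [hx]; convert hsum using 1; push_cast; ring

theorem not_coversAt_starSet {t : ℕ} (ht : t < h * (h - 1) * μ) :
    ¬ CoversAt (starSet h μ) t := by
  intro hc
  have hsub : ((↑) '' starSet h μ : Set (ZMod (basisModulus h μ))) ⊆
      {(μ : ZMod _), ((h * μ : ℕ) : ZMod _)} := by
    rintro _ ⟨x, hx, rfl⟩
    exact intCast_mem_of_mem_starSet hx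
  have huniv : Set.univ ⊆
      t • ({(μ : ZMod _), ((h * μ : ℕ) : ZMod _)} : Set (ZMod (basisModulus h μ))) :=
    fun z _ => Set.nsmul_subset_nsmul_left hsub (hc.mem_nsmul_image_intCast _ z)
  have hcard := (Set.ncard_le_ncard huniv (Set.toFinite _)).trans (ncard_nsmul_pair_le _ _ t)
  rw [Set.ncard_univ, Nat.card_zmod, basisModulus] at hcard
  omega

theorem not_coversAt_basisSet (hh : 2 ≤ h) (hμ : 2 ≤ μ) {t : ℕ} (ht : t + 4 ≤ 2 * h) :
    ¬ CoversAt (basisSet h μ) t := by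
  intro hc
  have hsub : ((↑) '' basisSet h μ : Set (ZMod (basisModulus h μ))) ⊆
      {0, 1, (μ : ZMod _), ((h * μ : ℕ) : ZMod _)} := by
    rintro _ ⟨x, hx | hx | hx, rfl⟩
    · rcases intCast_mem_of_mem_starSet hx with hr | hr <;> simp [hr]
    all_goals simp_all
  obtain ⟨a, b, c, habc, heq⟩ := nsmul_insert_zero_subset 1 _ _ t
    (Set.nsmul_subset_nsmul_left hsub (hc.mem_nsmul_image_intCast _ (-3)))
  apply basisModulus_not_dvd hh hμ (by omega : a + b + c + 4 ≤ 2 * h)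
  rw [← ZMod.natCast_eq_zero_iff]
  simp only [nsmul_eq_mul, mul_one] at heq
  push_cast at heq ⊢
  linear_combination -heq

theorem basisOrder_starSet (hh : 2 ≤ h) (hμ : 0 < μ) :
    basisOrder (starSet h μ) = h * (h - 1) * μ :=
  le_antisymm (basisOrder_le (coversAt_starSet hh hμ))
    (le_basisOrder ⟨_, coversAt_starSet hh hμ⟩ fun _ => not_coversAt_starSet)

theorem basisOrder_basisSet_le (hh : 2 ≤ h) (hμ : 2 ≤ μ) :
    basisOrder (basisSet h μ) ≤ 2 * h + μ - 4 :=
  basisOrder_le (coversAt_basisSet hh hμ)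

theorem le_basisOrder_basisSet (hh : 2 ≤ h) (hμ : 2 ≤ μ) :
    2 * h - 3 ≤ basisOrder (basisSet h μ) :=
  le_basisOrder ⟨_, coversAt_basisSet hh hμ⟩ fun _ hs => not_coversAt_basisSet hh hμ (by omega)

theorem basisSet_diff (hh : 1 ≤ h) (hμ : 2 ≤ μ) : basisSet h μ \ {0, 1} = starSet h μ := by
  rw [basisSet, Set.union_sdiff_right, sdiff_eq_left, Set.disjoint_left]
  intro x hx hx01
  have := le_of_mem_starSet hh hx
  rcases hx01 with rfl | rfl <;> omega

theorem isLeast_diam_starSet (hh : 2 ≤ h) (hμ : 1 ≤ μ) :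
    IsLeast {m : ℤ | ∃ y ∈ starSet h μ, m = diam ({0, 1} ∪ {y})} μ := by
  refine ⟨⟨μ, (natCast_mem_starSet hh).1,
    (diam_zero_one_union (by exact_mod_cast hμ)).symm⟩, ?_⟩
  rintro _ ⟨y, hy, rfl⟩
  have := le_of_mem_starSet (by omega) hy
  rw [diam_zero_one_union (by omega)]
  exact this

end

theorem tendsto_mul_div_sq_atTop (a b c : ℝ) :
    Tendsto (fun x : ℝ => (x + a) * (x + b) / (2 * x + c) ^ 2) atTop (𝓝 (1 / 4)) := by
  have hinv (d : ℝ) : Tendsto (fun x : ℝ => d / x) atTop (𝓝 0) :=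
    tendsto_const_nhds.div_atTop tendsto_id
  have hlim : Tendsto (fun x : ℝ => (1 + a / x) * (1 + b / x) / (2 + c / x) ^ 2)
      atTop (𝓝 ((1 + 0) * (1 + 0) / (2 + 0) ^ 2)) :=
    (((tendsto_const_nhds.add (hinv a)).mul (tendsto_const_nhds.add (hinv b))).div
      ((tendsto_const_nhds.add (hinv c)).pow 2) (by norm_num))
  norm_num at hlim
  refine hlim.congr' ?_
  filter_upwards [eventually_gt_atTop 0, eventually_gt_atTop (-c / 2)] with x hx hxc
  have : 2 * x + c ≠ 0 := by linarith
  field_simp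

theorem tendsto_mul_div_sq_of_bounds {f : ℕ → ℝ} {a b c₁ c₂ : ℝ} (ha : 0 ≤ a) (hb : 0 ≤ b)
    (hc₁ : 0 < c₁) (h₁ : ∀ i : ℕ, 2 * i + c₁ ≤ f i) (h₂ : ∀ i : ℕ, f i ≤ 2 * i + c₂) :
    Tendsto (fun i : ℕ => (i + a) * (i + b) / f i ^ 2) atTop (𝓝 (1 / 4)) := by
  refine tendsto_of_tendsto_of_tendsto_of_le_of_le
    ((tendsto_mul_div_sq_atTop a b c₂).comp tendsto_natCast_atTop_atTop)
    ((tendsto_mul_div_sq_atTop a b c₁).comp tendsto_natCast_atTop_atTop)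
    (fun i => ?_) (fun i => ?_)
  all_goals
    have hf : 2 * (i : ℝ) + c₁ ≤ f i := h₁ i
    have hpos : 0 < 2 * (i : ℝ) + c₁ := by positivity
    dsimp only [Function.comp_apply]
    gcongr
    all_goals nlinarith [h₂ i]

theorem tendsto_basisOrder_starSet_div {μ : ℕ} (hμ : 2 ≤ μ) :
    Tendsto (fun i : ℕ => (basisOrder (starSet (i + 2) μ) : ℝ) /
      (μ * (basisOrder (basisSet (i + 2) μ) : ℝ) ^ 2)) atTop (𝓝 (1 / 4)) := by
  have hlow (i : ℕ) := le_basisOrder_basisSet (h := i + 2) (by omega) hμ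
  have hup (i : ℕ) := basisOrder_basisSet_le (h := i + 2) (by omega) hμ
  have hlim := tendsto_mul_div_sq_of_bounds (a := 2) (b := 1) (c₁ := 1) (c₂ := μ)
    (f := fun i => (basisOrder (basisSet (i + 2) μ) : ℝ)) (by norm_num) (by norm_num)
    (by norm_num) (fun i => by have := hlow i; exact_mod_cast (by omega))
    (fun i => by have := hup i; exact_mod_cast (by omega))
  refine hlim.congr fun i => ?_
  rw [basisOrder_starSet (by omega) (by omega), show i + 2 - 1 = i + 1 by omega]
  have : (μ : ℝ) ≠ 0 := by positivity
  push_cast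
  field_simp

theorem stmt12 (h μ n : ℕ) (hh : 2 ≤ h) (hμ : 2 ≤ μ) (hn : n = h * (h - 1) * μ + 1)
    (X Astar A : Set ℤ) (hX : X = {0, 1})
    (hAstar : Astar = {x : ℤ | 0 ≤ x ∧
      (x % (n : ℤ) = (μ : ℤ) ∨ x % (n : ℤ) = (h : ℤ) * (μ : ℤ))})
    (hA : A = Astar ∪ X) :
    (IsAsympBasis A ∧ basisOrder A ≤ 2 * h + μ - 4 ∧
      basisOrder (A \ X) = h * (h - 1) * μ) ∧
    ∃ (A' X' : ℕ → Set ℤ) (h' : ℕ → ℕ),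
      Filter.Tendsto h' Filter.atTop Filter.atTop ∧
      (∀ i, IsAsympBasis (A' i) ∧ basisOrder (A' i) = h' i ∧
        X' i ⊆ A' i ∧ (X' i).ncard = 2 ∧ IsAsympBasis (A' i \ X' i) ∧
        IsLeast {m : ℤ | ∃ y ∈ A' i \ X' i, m = diam (X' i ∪ {y})} (μ : ℤ)) ∧
      Filter.Tendsto
        (fun i => (basisOrder (A' i \ X' i) : ℝ) / ((μ : ℝ) * (h' i : ℝ) ^ 2))
        Filter.atTop (nhds (1 / 4)) := by
  subst hn hX
  obtain rfl : Astar = starSet h μ := hAstar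
  obtain rfl : A = basisSet h μ := hA
  refine ⟨⟨⟨_, coversAt_basisSet hh hμ⟩, basisOrder_basisSet_le hh hμ, ?_⟩, ?_⟩
  · rw [basisSet_diff (by omega) hμ, basisOrder_starSet hh (by omega)]
  refine ⟨fun i => basisSet (i + 2) μ, fun _ => {0, 1}, fun i => basisOrder (basisSet (i + 2) μ),
    ?_, fun i => ?_, ?_⟩
  · refine tendsto_atTop_mono (fun i => ?_) tendsto_id
    have := le_basisOrder_basisSet (h := i + 2) (by omega) hμ
    dsimp only [id]
    omega
  · beta_reduce
    rw [basisSet_diff (by omega) hμ]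
    exact ⟨⟨_, coversAt_basisSet (by omega) hμ⟩, rfl, Set.subset_union_right,
      Set.ncard_pair zero_ne_one, ⟨_, coversAt_starSet (by omega) (by omega)⟩,
      isLeast_diam_starSet (by omega) (by omega)⟩
  · refine (tendsto_basisOrder_starSet_div hμ).congr fun i => ?_
    beta_reduce
    rw [basisSet_diff (by omega) hμ]
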